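/- The tree produced by GetFlow on an STN G is indeed a tree: each execution node corresponding to an STN node has exactly one parent in the produced structure, even when the corresponding STN node has in-degree greater than one. -/

import Mathlib

/-- Behavior trees produced by GetFlow: a WaitAction leaf referencing an STN
node, or an execution node for an STN node with the list of its child
subtrees. -/
inductive BT (V : Type*) where
  | wait : V → BT V
  | exec : V → List (BT V) → BT V

/-- Whether a behavior tree's root is an execution node labelled `v`. -/
def isExec {V : Type*} [DecidableEq V] (v : V) : BT V → Bool
  | .wait _ => false
  | .exec w _ => decide (w = v)

/-- Number of execution nodes labelled `v` occurring in a behavior tree. -/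
def countExec {V : Type*} [DecidableEq V] (v : V) : BT V → ℕ
  | .wait _ => 0
  | .exec w ts => (if w = v then 1 else 0) +
      (ts.attach.map (fun t => countExec v t.1)).sum
decreasing_by
  cases t with
  | mk t ht => simpa using Nat.lt_add_left 1 (List.sizeOf_lt_of_mem ht)

/-- Number of positions in the tree at which an execution node labelled `v`
occurs as a direct child of some node, i.e. the number of parents that the
execution node(s) for `v` have in the produced structure. -/
def countParents {V : Type*} [DecidableEq V] (v : V) : BT V → ℕ
  | .wait _ => 0
  | .exec _ ts => ts.countP (isExec v) +
      (ts.attach.map (fun t => countParents v t.1)).sum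
decreasing_by
  cases t with
  | mk t ht => simpa using Nat.lt_add_left 1 (List.sizeOf_lt_of_mem ht)

mutual
  /-- GetFlow: DFS over the graph `children` from node `n`, carrying the set `U`
  of used nodes: on a used node it emits a WaitAction leaf (which references but
  does not contain the node's subtree); otherwise it materializes the node as a
  BT subtree and recurses on all children, threading the used set. (`fuel`
  bounds the recursion depth and is taken large enough to never run out.) -/
  def getFlow {V : Type*} [DecidableEq V] (children : V → List V)
      (fuel : ℕ) (n : V) (U : Finset V) : BT V × Finset V :=
    match fuel with
    | 0 => (BT.wait n, U)
    | Nat.succ f =>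
      if n ∈ U then (BT.wait n, U)
      else
        let r := getFlowList children f (children n) (insert n U)
        (BT.exec n r.1, r.2)
  termination_by (fuel, 0)

  /-- Process a list of children left to right, threading the used set. -/
  def getFlowList {V : Type*} [DecidableEq V] (children : V → List V)
      (fuel : ℕ) (l : List V) (U : Finset V) : List (BT V) × Finset V :=
    match l with
    | [] => ([], U)
    | y :: ys =>
      let r := getFlow children fuel y U
      let r' := getFlowList children fuel ys r.2
      (r.1 :: r'.1, r'.2)
  termination_by (fuel, l.length + 1)
end

/-!
Every execution node other than the root is a direct child of exactly one execution node, so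
`countParents v t = countExec v t - [the root of t is exec v]`. It remains to see that GetFlow
materializes `v` at most once: it does so only when `v` is not in the used set, inserts it at that
moment, and never removes anything from that set, whence the invariant
`countExec v (getFlow … U).1 + [v ∈ U] ≤ [v ∈ (getFlow … U).2]`.
-/

theorem List.countP_add_sum_map_eq {α : Type*} (p : α → Bool) (f g : α → ℕ) (l : List α)
    (h : ∀ a ∈ l, f a + (if p a then 1 else 0) = g a) :
    l.countP p + (l.map f).sum = (l.map g).sum := by
  induction l with
  | nil => simp
  | cons a l ih =>
    have ha := h a List.mem_cons_self
    have hl := ih fun b hb => h b (List.mem_cons_of_mem a hb)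
    simp only [List.countP_cons, List.map_cons, List.sum_cons]
    omega

section BT

variable {V : Type*} [DecidableEq V]

@[simp]
lemma countExec_wait (v w : V) : countExec v (BT.wait w) = 0 := by
  rw [countExec]

@[simp]
lemma countExec_exec (v w : V) (ts : List (BT V)) :
    countExec v (BT.exec w ts) = (if w = v then 1 else 0) + (ts.map (countExec v)).sum := by
  rw [countExec, List.map_attach_eq_pmap, List.pmap_eq_map]

@[simp]
lemma countParents_wait (v w : V) : countParents v (BT.wait w) = 0 := by
  rw [countParents]

@[simp]
lemma countParents_exec (v w : V) (ts : List (BT V)) :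
    countParents v (BT.exec w ts) = ts.countP (isExec v) + (ts.map (countParents v)).sum := by
  rw [countParents, List.map_attach_eq_pmap, List.pmap_eq_map]

lemma countParents_add_ite_isExec (v : V) :
    ∀ t : BT V, countParents v t + (if isExec v t then 1 else 0) = countExec v t
  | .wait w => by simp [isExec]
  | .exec w ts => by
    have hts := List.countP_add_sum_map_eq (isExec v) (countParents v) (countExec v) ts
      fun t _ => countParents_add_ite_isExec v t
    simp only [countParents_exec, countExec_exec, isExec, decide_eq_true_eq]
    omega
decreasing_by simpa using Nat.lt_add_left 1 (List.sizeOf_lt_of_mem ‹_›)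

lemma isExec_getFlow_of_ne (children : V → List V) (fuel : ℕ) {v n : V} (U : Finset V)
    (hvn : v ≠ n) : isExec v (getFlow children fuel n U).1 = false := by
  cases fuel with
  | zero => rw [getFlow]; rfl
  | succ f =>
    rw [getFlow]
    split_ifs
    · rfl
    · simp [isExec, hvn.symm]

lemma ite_mem_insert_of_notMem {n : V} {U : Finset V} (hn : n ∉ U) (v : V) :
    (if v ∈ insert n U then 1 else 0 : ℕ) = (if n = v then 1 else 0) + if v ∈ U then 1 else 0 := by
  by_cases hnv : n = v
  · subst hnv; simp [hn]
  · simp [Finset.mem_insert, hnv, Ne.symm hnv]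

lemma sum_countExec_getFlowList_add_le (children : V → List V) (fuel : ℕ) (v : V)
    (hflow : ∀ n U, countExec v (getFlow children fuel n U).1 + (if v ∈ U then 1 else 0)
        ≤ if v ∈ (getFlow children fuel n U).2 then 1 else 0) :
    ∀ l U, ((getFlowList children fuel l U).1.map (countExec v)).sum + (if v ∈ U then 1 else 0)
        ≤ if v ∈ (getFlowList children fuel l U).2 then 1 else 0
  | [], U => by rw [getFlowList]; simp
  | y :: ys, U => by
    have hy := hflow y U
    have hys := sum_countExec_getFlowList_add_le children fuel v hflow ys (getFlow children fuel y U).2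
    rw [getFlowList]
    simp only [List.map_cons, List.sum_cons]
    omega

lemma countExec_getFlow_add_le (children : V → List V) (v : V) :
    ∀ (fuel : ℕ) (n : V) (U : Finset V),
      countExec v (getFlow children fuel n U).1 + (if v ∈ U then 1 else 0)
        ≤ if v ∈ (getFlow children fuel n U).2 then 1 else 0
  | 0, n, U => by rw [getFlow]; simp
  | f + 1, n, U => by
    rw [getFlow]
    by_cases hn : n ∈ U
    · simp [hn]
    · have hl := sum_countExec_getFlowList_add_le children f v
        (countExec_getFlow_add_le children v f) (children n) (insert n U)
      rw [ite_mem_insert_of_notMem hn] at hl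
      simp only [hn, if_false, countExec_exec]
      omega

lemma countExec_getFlow_empty_le_one (children : V → List V) (fuel : ℕ) (n v : V) :
    countExec v (getFlow children fuel n ∅).1 ≤ 1 := by
  have h := countExec_getFlow_add_le children v fuel n ∅
  simp only [Finset.notMem_empty, if_false, add_zero] at h
  split_ifs at h <;> omega

end BT

/-- The tree produced by GetFlow on an STN G is indeed a tree:
each execution node corresponding to an STN node has exactly one parent in the
produced structure — at most one parent for every node `v`, and exactly one
parent whenever the execution node for `v` occurs and `v` is not the root —
even when the corresponding STN node has in-degree greater than one. -/
theorem stmt16 {V : Type*} [Fintype V] [DecidableEq V]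
    (children : V → List V) (n₀ : V) :
    ∀ v : V,
      countParents v (getFlow children (Fintype.card V + 1) n₀ ∅).1 ≤ 1 ∧
      (v ≠ n₀ → countExec v (getFlow children (Fintype.card V + 1) n₀ ∅).1 = 1 →
        countParents v (getFlow children (Fintype.card V + 1) n₀ ∅).1 = 1) := by
  intro v
  set t := (getFlow children (Fintype.card V + 1) n₀ ∅).1
  have hedges := countParents_add_ite_isExec v t
  have hexec : countExec v t ≤ 1 := countExec_getFlow_empty_le_one children _ n₀ v
  refine ⟨by omega, fun hne hone => ?_⟩
  rw [isExec_getFlow_of_ne children _ ∅ hne] at hedges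
  simp only [Bool.false_eq_true, if_false, add_zero] at hedges
  omega
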